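/- arXiv:math/9512227 — 7 statements merged into one kernel-verified Lean document; each statement's English description precedes it below -/
import Mathlib

section
/- Let A be an infinite set and δ an ordinal with δ ≥ (2^{|A|})⁺. Then for every sequence ⟨f_β : β < δ⟩ of functions from A to the ordinals, there exist β < γ < δ such that f_β(a) ≤ f_γ(a) for all a ∈ A. -/
universe u v
namespace Stmt1Aux
variable {A : Type u}

noncomputable def Emem (c : Ordinal.{u} → Ordinal.{u} → A) (γ : Ordinal.{u}) :
    Ordinal.{u} → Prop :=
  Ordinal.lt_wf.fix fun β IH => β < γ ∧ ∀ β' (h : β' < β), IH β' h → c β' β = c β' γ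

theorem Emem_def (c : Ordinal.{u} → Ordinal.{u} → A) (γ β : Ordinal.{u}) :
    Emem c γ β ↔ β < γ ∧ ∀ β', β' < β → Emem c γ β' → c β' β = c β' γ := by
  unfold Emem; rw [WellFounded.fix_eq]

noncomputable def rk (c : Ordinal.{u} → Ordinal.{u} → A) (γ : Ordinal.{u}) :
    Ordinal.{u} → Ordinal.{u} :=
  Ordinal.lt_wf.fix fun β IH => sSup {o | ∃ β', ∃ h : β' < β, Emem c γ β' ∧ o = IH β' h + 1}

theorem rk_def (c : Ordinal.{u} → Ordinal.{u} → A) (γ β : Ordinal.{u}) :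
    rk c γ β = sSup {o | ∃ β', β' < β ∧ Emem c γ β' ∧ o = rk c γ β' + 1} := by
  unfold rk; rw [WellFounded.fix_eq]
  congr 1; ext o
  constructor
  · rintro ⟨β', h, hm, rfl⟩; exact ⟨β', h, hm, rfl⟩
  · rintro ⟨β', h, hm, rfl⟩; exact ⟨β', h, hm, rfl⟩

variable {c : Ordinal.{u} → Ordinal.{u} → A} {γ β β' : Ordinal.{u}}

theorem Emem.lt_gamma (h : Emem c γ β) : β < γ := ((Emem_def c γ β).mp h).1

theorem endhom (h : Emem c γ β) (h' : Emem c γ β') (hlt : β' < β) : c β' β = c β' γ :=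
  ((Emem_def c γ β).mp h).2 β' hlt h'

theorem rk_le_self (c : Ordinal.{u} → Ordinal.{u} → A) (γ : Ordinal.{u}) :
    ∀ β, rk c γ β ≤ β := by
  intro β
  induction β using Ordinal.induction with
  | h β IH =>
    rw [rk_def]
    apply csSup_le'
    rintro o ⟨β', hlt, hm, rfl⟩
    calc rk c γ β' + 1 ≤ β' + 1 := by
          exact add_le_add_left (IH β' hlt) 1
      _ ≤ β := by
          rw [Ordinal.add_one_eq_succ]; exact Order.succ_le_of_lt hlt

theorem rkSet_bdd : BddAbove {o | ∃ β', β' < β ∧ Emem c γ β' ∧ o = rk c γ β' + 1} := by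
  refine ⟨β, ?_⟩
  rintro o ⟨β', hlt, hm, rfl⟩
  calc rk c γ β' + 1 ≤ β' + 1 := add_le_add_left (rk_le_self c γ β') 1
    _ ≤ β := by rw [Ordinal.add_one_eq_succ]; exact Order.succ_le_of_lt hlt

theorem rk_lt_rk (h' : Emem c γ β') (hlt : β' < β) : rk c γ β' < rk c γ β := by
  have : rk c γ β' + 1 ≤ rk c γ β := by
    rw [rk_def c γ β]
    exact le_csSup rkSet_bdd ⟨β', hlt, h', rfl⟩
  exact lt_of_lt_of_le (by rw [Ordinal.add_one_eq_succ]; exact Order.lt_succ _) this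

noncomputable def osup (c : Ordinal.{u} → Ordinal.{u} → A) (γ : Ordinal.{u}) : Ordinal.{u} :=
  sSup {x | ∃ β, Emem c γ β ∧ x = rk c γ β + 1}

theorem osupSet_bdd : BddAbove {x | ∃ β, Emem c γ β ∧ x = rk c γ β + 1} := by
  refine ⟨γ, ?_⟩
  rintro o ⟨β, hm, rfl⟩
  calc rk c γ β + 1 ≤ β + 1 := add_le_add_left (rk_le_self c γ β) 1
    _ ≤ γ := by rw [Ordinal.add_one_eq_succ]; exact Order.succ_le_of_lt hm.lt_gamma

theorem rk_lt_osup (h : Emem c γ β) : rk c γ β < osup c γ := by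
  have : rk c γ β + 1 ≤ osup c γ := le_csSup osupSet_bdd ⟨β, h, rfl⟩
  exact lt_of_lt_of_le (by rw [Ordinal.add_one_eq_succ]; exact Order.lt_succ _) this

theorem rk_inj (h : Emem c γ β) (h' : Emem c γ β') (he : rk c γ β = rk c γ β') : β = β' := by
  rcases lt_trichotomy β β' with hlt | heq | hlt
  · exact absurd he (ne_of_lt (rk_lt_rk h hlt))
  · exact heq
  · exact absurd he.symm (ne_of_lt (rk_lt_rk h' hlt))

end Stmt1Aux


open Cardinal

theorem card_sSup_le (S : Set Ordinal.{u}) (hbd : BddAbove S) {μ : Cardinal.{u}}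
    (hμ : ℵ₀ ≤ μ) (hS : #S ≤ Cardinal.lift.{u+1} μ) (h : ∀ o ∈ S, o.card ≤ μ) :
    (sSup S).card ≤ μ := by
  rcases S.eq_empty_or_nonempty with rfl | hne
  · rw [csSup_empty]
    simp
  · rw [← Cardinal.lift_le.{u+1}, ← Ordinal.mk_Iio_ordinal]
    have key : Set.Iio (sSup S) = ⋃ o ∈ S, Set.Iio o := by
      ext x
      simp only [Set.mem_Iio, Set.mem_iUnion, exists_prop]
      exact lt_csSup_iff hbd hne
    rw [key]
    calc #(⋃ o ∈ S, Set.Iio o) ≤ #S * ⨆ o : S, #(Set.Iio o.1) := Cardinal.mk_biUnion_le _ _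
      _ ≤ Cardinal.lift.{u+1} μ * Cardinal.lift.{u+1} μ := by
          apply mul_le_mul' hS
          apply ciSup_le'
          intro o
          rw [Ordinal.mk_Iio_ordinal]
          exact Cardinal.lift_le.mpr (h o o.2)
      _ = Cardinal.lift.{u+1} μ := Cardinal.mul_eq_self (by simpa using hμ)

namespace Stmt1Aux
variable {A : Type u} {c : Ordinal.{u} → Ordinal.{u} → A} {γ β β' : Ordinal.{u}}

theorem fiber_finite (f : Ordinal.{u} → A → Ordinal.{v})
    (hcol : ∀ β β', β < β' → β' < γ → f β' (c β β') < f β (c β β')) (a : A) :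
    Set.Finite {β | Emem c γ β ∧ c β γ = a} := by
  by_contra hinf
  have hinf : Set.Infinite {β | Emem c γ β ∧ c β γ = a} := hinf
  have e := hinf.natEmbedding
  set seq : ℕ → Ordinal.{u} := fun n => (e n).1 with hseq
  obtain ⟨g, hg | hg⟩ := exists_increasing_or_nonincreasing_subseq ((· < ·) : Ordinal.{u} → Ordinal.{u} → Prop) seq
  · set F : ℕ → Ordinal.{v} := fun n => f (seq (g n)) a with hF
    have hdesc : ∀ n, F (n + 1) < F n := by
      intro n
      have hlt : seq (g n) < seq (g (n + 1)) := hg n (n + 1) (Nat.lt_succ_self n)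
      have m1 : Emem c γ (seq (g n)) ∧ c (seq (g n)) γ = a := (e (g n)).2
      have m2 : Emem c γ (seq (g (n + 1))) ∧ c (seq (g (n + 1))) γ = a := (e (g (n + 1))).2
      have hc : c (seq (g n)) (seq (g (n + 1))) = a := by
        rw [endhom m2.1 m1.1 hlt, m1.2]
      have := hcol (seq (g n)) (seq (g (n + 1))) hlt m2.1.lt_gamma
      rwa [hc] at this
    exact RelEmbedding.not_wellFounded
      (RelEmbedding.natGT F hdesc) Ordinal.lt_wf
  · have hdesc : ∀ n, seq (g (n + 1)) < seq (g n) := by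
      intro n
      have hne : seq (g (n + 1)) ≠ seq (g n) := by
        intro hh
        have : e (g (n + 1)) = e (g n) := Subtype.ext hh
        have := e.injective this
        have hgne : g (n+1) ≠ g n := (g.injective.ne_iff).mpr (by omega)
        exact hgne this
      have hnlt := hg n (n + 1) (Nat.lt_succ_self n)
      exact lt_of_le_of_ne (not_lt.mp hnlt) hne
    exact RelEmbedding.not_wellFounded
      (RelEmbedding.natGT _ hdesc) Ordinal.lt_wf

theorem Eset_card [Infinite A] (f : Ordinal.{u} → A → Ordinal.{v})
    (hcol : ∀ β β', β < β' → β' < γ → f β' (c β β') < f β (c β β')) :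
    #{β | Emem c γ β} ≤ Cardinal.lift.{u+1} #A := by
  have key : {β | Emem c γ β} = ⋃ a : ULift.{u+1} A, {β | Emem c γ β ∧ c β γ = a.down} := by
    ext β
    simp only [Set.mem_setOf_eq, Set.mem_iUnion]
    exact ⟨fun h => ⟨⟨c β γ⟩, h, rfl⟩, fun ⟨a, h, _⟩ => h⟩
  rw [key]
  calc #(⋃ a : ULift.{u+1} A, {β | Emem c γ β ∧ c β γ = a.down})
      ≤ #(ULift.{u+1} A) * ⨆ a : ULift.{u+1} A, #{β | Emem c γ β ∧ c β γ = a.down} :=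
        Cardinal.mk_iUnion_le _
    _ ≤ Cardinal.lift.{u+1} #A * ℵ₀ := by
        apply mul_le_mul'
        · simp
        · apply ciSup_le'
          intro a
          exact le_of_lt ((fiber_finite f hcol a.down).lt_aleph0)
    _ = Cardinal.lift.{u+1} #A := by
        apply Cardinal.mul_eq_left _ _ _
        · simpa using Cardinal.infinite_iff.mp ‹Infinite A›
        · simpa using Cardinal.aleph0_le_lift.mpr (Cardinal.infinite_iff.mp ‹Infinite A›)
        · exact Cardinal.aleph0_ne_zero

end Stmt1Aux

namespace Stmt1Aux
variable {A : Type u} {c : Ordinal.{u} → Ordinal.{u} → A} {γ β β' : Ordinal.{u}} {μ : Cardinal.{u}}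

theorem rk_card (hμ : ℵ₀ ≤ μ) (hE : #{β | Emem c γ β} ≤ Cardinal.lift.{u+1} μ) :
    ∀ β, (rk c γ β).card ≤ μ := by
  intro β
  induction β using Ordinal.induction with
  | h β IH =>
    rw [rk_def]
    apply card_sSup_le _ rkSet_bdd hμ
    · have hset : {o | ∃ β', β' < β ∧ Emem c γ β' ∧ o = rk c γ β' + 1}
          = (fun β' => rk c γ β' + 1) '' {β' | β' < β ∧ Emem c γ β'} := by
            ext o
            simp only [Set.mem_setOf_eq, Set.mem_image]
            constructor
            · rintro ⟨β', h1, h2, rfl⟩; exact ⟨β', ⟨h1, h2⟩, rfl⟩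
            · rintro ⟨β', ⟨h1, h2⟩, rfl⟩; exact ⟨β', h1, h2, rfl⟩
      rw [hset]
      calc #((fun β' => rk c γ β' + 1) '' {β' | β' < β ∧ Emem c γ β'})
          ≤ #{β' | β' < β ∧ Emem c γ β'} := Cardinal.mk_image_le
        _ ≤ #{β | Emem c γ β} := Cardinal.mk_le_mk_of_subset (fun x hx => hx.2)
        _ ≤ Cardinal.lift.{u+1} μ := hE
    · rintro o ⟨β', hlt, hm, rfl⟩
      rw [Ordinal.card_add, Ordinal.card_one]
      calc (rk c γ β').card + 1 ≤ μ + μ :=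
            add_le_add (IH β' hlt) (Cardinal.one_le_aleph0.trans hμ)
        _ = μ := Cardinal.add_eq_self hμ

theorem osup_card (hμ : ℵ₀ ≤ μ) (hE : #{β | Emem c γ β} ≤ Cardinal.lift.{u+1} μ) :
    (osup c γ).card ≤ μ := by
  rw [osup]
  apply card_sSup_le _ osupSet_bdd hμ
  · have hset : {x | ∃ β, Emem c γ β ∧ x = rk c γ β + 1}
        = (fun β' => rk c γ β' + 1) '' {β' | Emem c γ β'} := by
          ext o
          simp only [Set.mem_setOf_eq, Set.mem_image]
          constructor
          · rintro ⟨β', h2, rfl⟩; exact ⟨β', h2, rfl⟩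
          · rintro ⟨β', h2, rfl⟩; exact ⟨β', h2, rfl⟩
    rw [hset]
    calc #((fun β' => rk c γ β' + 1) '' {β' | Emem c γ β'})
        ≤ #{β' | Emem c γ β'} := Cardinal.mk_image_le
      _ ≤ Cardinal.lift.{u+1} μ := hE
  · rintro o ⟨β', hm, rfl⟩
    rw [Ordinal.card_add, Ordinal.card_one]
    calc (rk c γ β').card + 1 ≤ μ + μ :=
          add_le_add (rk_card hμ hE β') (Cardinal.one_le_aleph0.trans hμ)
      _ = μ := Cardinal.add_eq_self hμ

theorem osup_lt (hμ : ℵ₀ ≤ μ) (hE : #{β | Emem c γ β} ≤ Cardinal.lift.{u+1} μ) :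
    osup c γ < (Order.succ μ).ord := by
  rw [Cardinal.lt_ord]
  exact lt_of_le_of_lt (osup_card hμ hE) (Order.lt_succ μ)

end Stmt1Aux

namespace Stmt1Aux
open Cardinal

def TT (A : Type u) (Λ : Ordinal.{u}) : Type (u + 1) :=
  Σ o : (Set.Iio Λ), ((Set.Iio o.1) → Option A)

theorem TT_card {A : Type u} [Infinite A] :
    #(TT A ((Order.succ (#A)).ord)) ≤ 2 ^ (Cardinal.lift.{u+1} #A) := by
  have hΛ : ((Order.succ (#A)).ord : Ordinal.{u}) = (Order.succ (#A)).ord := rfl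
  rw [TT, Cardinal.mk_sigma]
  calc (Cardinal.sum fun o : (Set.Iio ((Order.succ (#A)).ord : Ordinal.{u})) => #((Set.Iio o.1) → Option A))
      ≤ Cardinal.sum fun _ : (Set.Iio ((Order.succ (#A)).ord : Ordinal.{u})) => 2 ^ (Cardinal.lift.{u+1} #A) := by
        apply Cardinal.sum_le_sum
        intro o
        rw [Cardinal.mk_arrow]
        have hco : o.1.card ≤ #A := by
          have h2 := o.2
          rw [Set.mem_Iio, Cardinal.lt_ord] at h2
          exact Order.lt_succ_iff.mp h2
        calc Cardinal.lift.{u+1} #(Option A) ^ Cardinal.lift.{u} #(Set.Iio o.1)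
            = Cardinal.lift.{u+1} #A ^ Cardinal.lift.{u+1} o.1.card := by
              rw [Cardinal.mk_option, Ordinal.mk_Iio_ordinal, Cardinal.lift_add,
                Cardinal.lift_one, Cardinal.lift_id'.{u, u+1}]
              congr 1
              exact Cardinal.add_one_eq (by simpa using Cardinal.aleph0_le_mk A)
          _ ≤ Cardinal.lift.{u+1} #A ^ Cardinal.lift.{u+1} #A := by
              apply Cardinal.power_le_power_left
              · simp
              · exact Cardinal.lift_le.mpr hco
          _ = 2 ^ Cardinal.lift.{u+1} #A := Cardinal.power_self_eq
              (by simpa using Cardinal.aleph0_le_mk A)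
    _ = #(Set.Iio ((Order.succ (#A)).ord : Ordinal.{u})) * 2 ^ (Cardinal.lift.{u+1} #A) := Cardinal.sum_const' _ _
    _ ≤ (2 ^ Cardinal.lift.{u+1} #A) * 2 ^ (Cardinal.lift.{u+1} #A) := by
        apply mul_le_mul'
        · rw [Ordinal.mk_Iio_ordinal, Cardinal.card_ord, Cardinal.lift_succ]
          apply Order.succ_le_of_lt
          exact Cardinal.cantor _
        · exact le_rfl
    _ = 2 ^ Cardinal.lift.{u+1} #A := Cardinal.mul_eq_self
        (le_trans (by simpa using Cardinal.aleph0_le_mk A) (le_of_lt (Cardinal.cantor _)))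

theorem Iio_K_card {A : Type u} [Infinite A] :
    #(Set.Iio ((Order.succ ((2 : Cardinal) ^ #A)).ord))
      = Order.succ ((2 : Cardinal) ^ Cardinal.lift.{u+1} #A) := by
  rw [Ordinal.mk_Iio_ordinal, Cardinal.card_ord, Cardinal.lift_succ, Cardinal.lift_power, Cardinal.lift_two]

theorem TT_eval {A : Type u} {Λ : Ordinal.{u}} {o₁ o₂ : (Set.Iio Λ)}
    {g₁ : (Set.Iio o₁.1) → Option A} {g₂ : (Set.Iio o₂.1) → Option A}
    (h : (⟨o₁, g₁⟩ : TT A Λ) = ⟨o₂, g₂⟩) :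
    o₁.1 = o₂.1 ∧ ∀ i (h₁ : i < o₁.1) (h₂ : i < o₂.1), g₁ ⟨i, h₁⟩ = g₂ ⟨i, h₂⟩ := by
  obtain ⟨ho, hg⟩ := Sigma.mk.inj_iff.mp h
  subst ho
  have hg' : g₁ = g₂ := eq_of_heq hg
  subst hg'
  exact ⟨rfl, fun i h₁ h₂ => rfl⟩

end Stmt1Aux

open Stmt1Aux Cardinal in
theorem stmt1' {A : Type u} [Infinite A] (δ : Ordinal.{u})
    (hδ : (Order.succ ((2 : Cardinal) ^ Cardinal.mk A)).ord ≤ δ)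
    (f : Ordinal.{u} → A → Ordinal.{v}) :
    ∃ β γ : Ordinal.{u}, β < γ ∧ γ < δ ∧ ∀ a : A, f β a ≤ f γ a := by
  classical
  by_contra hcon
  push_neg at hcon
  have hch : ∀ β γ' : Ordinal, β < γ' →
      γ' < (Order.succ ((2 : Cardinal) ^ #A)).ord → ∃ a, f γ' a < f β a := by
    intro β γ' h1 h2
    exact hcon β γ' h1 (lt_of_lt_of_le h2 hδ)
  obtain ⟨c, ccol⟩ : ∃ c : Ordinal → Ordinal → A, ∀ β γ', β < γ' →
      γ' < (Order.succ ((2 : Cardinal) ^ #A)).ord →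
      f γ' (c β γ') < f β (c β γ') := by
    refine ⟨fun β γ' => if h : β < γ' ∧ γ' < (Order.succ ((2 : Cardinal) ^ #A)).ord
      then (hch β γ' h.1 h.2).choose else Classical.arbitrary A, ?_⟩
    intro β γ' h1 h2
    simp only [dif_pos (And.intro h1 h2)]
    exact (hch β γ' h1 h2).choose_spec
  have hE : ∀ γ', γ' < (Order.succ ((2 : Cardinal) ^ #A)).ord →
      #{β | Emem c γ' β} ≤ Cardinal.lift.{u+1} #A := by
    intro γ' hγ'
    exact Eset_card f (fun β β' h1 h2 => ccol β β' h1 (h2.trans hγ'))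
  have hosup : ∀ γ', γ' < (Order.succ ((2 : Cardinal) ^ #A)).ord →
      osup c γ' < (Order.succ (#A)).ord := by
    intro γ' hγ'
    exact osup_lt (Cardinal.aleph0_le_mk A) (hE γ' hγ')
  obtain ⟨gfun, gval, gnone⟩ : ∃ g : Ordinal → Ordinal → Option A,
      (∀ γ' β, Emem c γ' β → g γ' (rk c γ' β) = some (c β γ')) ∧
      (∀ γ' i, (∀ β, Emem c γ' β → rk c γ' β ≠ i) → g γ' i = none) := by
    refine ⟨fun γ' i => if h : ∃ β, Emem c γ' β ∧ rk c γ' β = i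
      then some (c h.choose γ') else none, ?_, ?_⟩
    · intro γ' β hm
      have hex : ∃ β0, Emem c γ' β0 ∧ rk c γ' β0 = rk c γ' β := ⟨β, hm, rfl⟩
      beta_reduce
      rw [dif_pos hex]
      congr 1
      exact congrArg (fun x => c x γ') (rk_inj hex.choose_spec.1 hm hex.choose_spec.2)
    · intro γ' i hne
      beta_reduce
      rw [dif_neg]
      rintro ⟨β, hm, hrk⟩
      exact hne β hm hrk
  have key : ∀ (γ₁ γ₂ : Ordinal) (h1 : γ₁ < (Order.succ ((2 : Cardinal) ^ #A)).ord)
      (h2 : γ₂ < (Order.succ ((2 : Cardinal) ^ #A)).ord), γ₁ < γ₂ →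
      ((⟨⟨osup c γ₁, hosup _ h1⟩, fun i => gfun γ₁ i.1⟩ : TT A ((Order.succ (#A)).ord))
        = ⟨⟨osup c γ₂, hosup _ h2⟩, fun i => gfun γ₂ i.1⟩) → False := by
    intro γ₁ γ₂ h1 h2 hγ12 hinv
    obtain ⟨ho, hgeq'⟩ := TT_eval hinv
    have ho : osup c γ₁ = osup c γ₂ := ho
    have hgeq : ∀ i, i < osup c γ₁ → i < osup c γ₂ → gfun γ₁ i = gfun γ₂ i :=
      fun i ha hb => hgeq' i ha hb
    have main : ∀ β, β ≤ γ₁ →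
        ((β < γ₁ → (Emem c γ₁ β ↔ Emem c γ₂ β)) ∧ rk c γ₁ β = rk c γ₂ β ∧
          (Emem c γ₁ β → c β γ₁ = c β γ₂)) := by
      intro β
      induction β using Ordinal.induction with
      | h β IH =>
        intro hβ
        have hmem : β < γ₁ → (Emem c γ₁ β ↔ Emem c γ₂ β) := by
          intro hβγ
          rw [Emem_def, Emem_def]
          constructor
          · rintro ⟨hh1, hh2⟩
            refine ⟨hβγ.trans hγ12, fun β' hb' hm' => ?_⟩
            have hb'γ : β' < γ₁ := lt_of_lt_of_le hb' hβ
            have hIH := IH β' hb' (le_of_lt hb'γ)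
            have hm1 : Emem c γ₁ β' := (hIH.1 hb'γ).mpr hm'
            rw [← hIH.2.2 hm1]
            exact hh2 β' hb' hm1
          · rintro ⟨hh1, hh2⟩
            refine ⟨hβγ, fun β' hb' hm' => ?_⟩
            have hb'γ : β' < γ₁ := lt_of_lt_of_le hb' hβ
            have hIH := IH β' hb' (le_of_lt hb'γ)
            have hm2 : Emem c γ₂ β' := (hIH.1 hb'γ).mp hm'
            rw [hIH.2.2 hm']
            exact hh2 β' hb' hm2
        have hrkeq : rk c γ₁ β = rk c γ₂ β := by
          rw [rk_def, rk_def]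
          congr 1
          ext o
          constructor
          · rintro ⟨β', hb', hm, rfl⟩
            have hb'γ : β' < γ₁ := lt_of_lt_of_le hb' hβ
            have hIH := IH β' hb' (le_of_lt hb'γ)
            exact ⟨β', hb', (hIH.1 hb'γ).mp hm, by rw [hIH.2.1]⟩
          · rintro ⟨β', hb', hm, rfl⟩
            have hb'γ : β' < γ₁ := lt_of_lt_of_le hb' hβ
            have hIH := IH β' hb' (le_of_lt hb'γ)
            exact ⟨β', hb', (hIH.1 hb'γ).mpr hm, by rw [hIH.2.1]⟩
        refine ⟨hmem, hrkeq, ?_⟩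
        intro hm
        have hβγ : β < γ₁ := hm.lt_gamma
        have hm2 : Emem c γ₂ β := (hmem hβγ).mp hm
        have ha : rk c γ₁ β < osup c γ₁ := rk_lt_osup hm
        have hb : rk c γ₁ β < osup c γ₂ := by
          rw [hrkeq]; exact rk_lt_osup hm2
        have heq := hgeq (rk c γ₁ β) ha hb
        rw [gval γ₁ β hm, hrkeq, gval γ₂ β hm2] at heq
        exact Option.some.inj heq
    have hγmem : Emem c γ₂ γ₁ := by
      rw [Emem_def]
      refine ⟨hγ12, fun β' hb' hm' => ?_⟩
      have hIH := main β' (le_of_lt hb')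
      have hm1 : Emem c γ₁ β' := (hIH.1 hb').mpr hm'
      exact hIH.2.2 hm1
    have hi2 : rk c γ₂ γ₁ < osup c γ₂ := rk_lt_osup hγmem
    have hi1 : rk c γ₂ γ₁ < osup c γ₁ := by rw [ho]; exact hi2
    have hnone : gfun γ₁ (rk c γ₂ γ₁) = none := by
      apply gnone
      intro β hm hrkβ
      have hb : β < γ₁ := hm.lt_gamma
      have hIH := main β (le_of_lt hb)
      have hm2 : Emem c γ₂ β := (hIH.1 hb).mp hm
      have hlt : rk c γ₂ β < rk c γ₂ γ₁ := rk_lt_rk hm2 hb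
      rw [← hIH.2.1, hrkβ] at hlt
      exact lt_irrefl _ hlt
    have hsome := hgeq (rk c γ₂ γ₁) hi1 hi2
    rw [hnone, gval γ₂ γ₁ hγmem] at hsome
    exact Option.some_ne_none _ hsome.symm
  have hinj : Function.Injective
      (fun γ' : (Set.Iio ((Order.succ ((2 : Cardinal) ^ #A)).ord)) =>
        (⟨⟨osup c γ'.1, hosup _ γ'.2⟩, fun i => gfun γ'.1 i.1⟩ :
          TT A ((Order.succ (#A)).ord))) := by
    intro x y hxy
    by_contra hne
    have hne' : x.1 ≠ y.1 := fun h => hne (Subtype.ext h)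
    simp only [] at hxy
    rcases lt_or_gt_of_ne hne' with h | h
    · exact key x.1 y.1 x.2 y.2 h hxy
    · exact key y.1 x.1 y.2 x.2 h hxy.symm
  have hcard1 : #(Set.Iio ((Order.succ ((2 : Cardinal) ^ #A)).ord))
      ≤ #(TT A ((Order.succ (#A)).ord)) := Cardinal.mk_le_of_injective hinj
  rw [Iio_K_card] at hcard1
  have hcard2 := hcard1.trans TT_card
  have hfin : (2 : Cardinal) ^ Cardinal.lift.{u+1} #A < 2 ^ Cardinal.lift.{u+1} #A :=
    lt_of_lt_of_le (Order.lt_succ _) hcard2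
  exact lt_irrefl _ hfin

/-- If `A` is infinite and `δ ≥ (2^{|A|})⁺`, then any `δ`-indexed sequence of ordinal-valued
functions on `A` contains a pointwise ≤-increasing pair. -/
theorem stmt1 {A : Type*} [Infinite A] (δ : Ordinal)
    (hδ : (Order.succ ((2 : Cardinal) ^ Cardinal.mk A)).ord ≤ δ)
    (f : Ordinal → A → Ordinal) :
    ∃ β γ : Ordinal, β < γ ∧ γ < δ ∧ ∀ a : A, f β a ≤ f γ a :=
  stmt1' δ hδ f
end

section
/- Let D be a countably complete filter on an infinite set A (the intersection of countably many members of D belongs to D), and let δ ≥ (2^{2^{|A|}})⁺ be an ordinal. Then for every sequence ⟨f_β : β < δ⟩ of functions from A to the ordinals, there exist β < γ < δ such that {a ∈ A : f_β(a) ≤ f_γ(a)} ∈ D. -/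
open Cardinal Set Order

universe u

namespace StmtAux

variable {ι : Type u} {C : Type u} [LinearOrder ι] [WellFoundedLT ι]

open Classical in
/-- Pick the least element satisfying `P`, or `x` if there is none. -/
noncomputable def pick (P : ι → Prop) (x : ι) : ι :=
  if h : ∃ z, P z then
    (IsWellFounded.wf (r := ((· < ·) : ι → ι → Prop))).min {z | P z} h
  else x

theorem pick_spec (P : ι → Prop) (x : ι) (h : ∃ z, P z) : P (pick P x) := by
  rw [pick, dif_pos h]
  exact WellFounded.min_mem _ {z | P z} h

theorem pick_not_lt (P : ι → Prop) (x : ι) (h : ∃ z, P z) {z : ι} (hz : P z) :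
    ¬z < pick P x := by
  rw [pick, dif_pos h]
  exact WellFounded.not_lt_min _ {z | P z} hz

theorem pick_indep (P : ι → Prop) (x y : ι) (h : ∃ z, P z) : pick P x = pick P y := by
  rw [pick, pick, dif_pos h, dif_pos h]

/-- The greedy branch of `x`: at stage `ξ`, the least element distinct from all previous
stages whose colors against all previous stages agree with those of `x`. -/
noncomputable def branch (c : ι → ι → C) (x : ι) (ξ : Ordinal.{u}) : ι :=
  pick (fun z => (∀ η : Set.Iio ξ, branch c x η.1 ≠ z) ∧
      ∀ η : Set.Iio ξ, c (branch c x η.1) z = c (branch c x η.1) x) x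
termination_by ξ
decreasing_by all_goals exact η.2

/-- The predicate of which `branch c x ξ` is the least solution (when solvable). -/
def Q (c : ι → ι → C) (x : ι) (ξ : Ordinal.{u}) (z : ι) : Prop :=
  (∀ η : Set.Iio ξ, branch c x η.1 ≠ z) ∧
    ∀ η : Set.Iio ξ, c (branch c x η.1) z = c (branch c x η.1) x

set_option linter.unusedSectionVars false

theorem branch_eq (c : ι → ι → C) (x : ι) (ξ : Ordinal.{u}) :
    branch c x ξ = pick (Q c x ξ) x := by
  rw [branch]; rfl

theorem q_self {c : ι → ι → C} {x : ι} {ξ : Ordinal.{u}}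
    (h : ∀ η < ξ, branch c x η ≠ x) : Q c x ξ x :=
  ⟨fun η => h η.1 η.2, fun _ => rfl⟩

theorem branch_spec {c : ι → ι → C} {x : ι} {ξ : Ordinal.{u}}
    (h : ∀ η < ξ, branch c x η ≠ x) : Q c x ξ (branch c x ξ) := by
  rw [branch_eq]
  exact pick_spec _ _ ⟨x, q_self h⟩

/-- Determinism: branches with equal color traces agree. -/
theorem branch_det (c : ι → ι → C) (x y : ι) (ξ : Ordinal.{u})
    (hx : ∀ η < ξ, branch c x η ≠ x) (hy : ∀ η < ξ, branch c y η ≠ y)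
    (hcol : ∀ η < ξ, c (branch c x η) x = c (branch c y η) y) :
    ∀ η ≤ ξ, branch c x η = branch c y η := by
  intro η
  induction η using Ordinal.induction with
  | h η IH =>
    intro hη
    have e : ∀ η' : Set.Iio η, branch c x η'.1 = branch c y η'.1 := fun η' =>
      IH η'.1 η'.2 (le_of_lt (lt_of_lt_of_le η'.2 hη))
    have ecol : ∀ η' : Set.Iio η,
        c (branch c x η'.1) x = c (branch c y η'.1) y := fun η' =>
      hcol η'.1 (lt_of_lt_of_le η'.2 hη)
    have hQ : Q c x η = Q c y η := by
      funext z
      apply propext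
      constructor
      · rintro ⟨h1, h2⟩
        refine ⟨fun η' => by rw [← e η']; exact h1 η', fun η' => ?_⟩
        calc c (branch c y η'.1) z = c (branch c x η'.1) z := by rw [e η']
          _ = c (branch c x η'.1) x := h2 η'
          _ = c (branch c y η'.1) y := ecol η'
      · rintro ⟨h1, h2⟩
        refine ⟨fun η' => by rw [e η']; exact h1 η', fun η' => ?_⟩
        calc c (branch c x η'.1) z = c (branch c y η'.1) z := by rw [e η']
          _ = c (branch c y η'.1) y := h2 η'
          _ = c (branch c x η'.1) x := (ecol η').symm
    rw [branch_eq, branch_eq, hQ]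
    exact pick_indep _ _ _ ⟨y, q_self fun η' hη' => hy η' (lt_of_lt_of_le hη' hη)⟩

/-- A strictly monotone sequence inside an infinite subset of a well-order. -/
noncomputable def natSeq (F : Set ι) (hF : F.Infinite) : ℕ → ι := fun n =>
  (IsWellFounded.wf (r := ((· < ·) : ι → ι → Prop))).min
    (F \ ⋃ m : Fin n, {natSeq F hF m.1})
    (Set.Infinite.nonempty (hF.diff (Set.finite_iUnion fun _ => Set.finite_singleton _)))
termination_by n => n
decreasing_by all_goals exact Fin.is_lt _

theorem natSeq_eq (F : Set ι) (hF : F.Infinite) (n : ℕ) :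
    natSeq F hF n = (IsWellFounded.wf (r := ((· < ·) : ι → ι → Prop))).min
      (F \ ⋃ m : Fin n, {natSeq F hF m.1})
      (Set.Infinite.nonempty (hF.diff (Set.finite_iUnion fun _ => Set.finite_singleton _))) := by
  conv_lhs => rw [natSeq]

theorem natSeq_spec (F : Set ι) (hF : F.Infinite) (n : ℕ) :
    natSeq F hF n ∈ F ∧ ∀ m < n, natSeq F hF m ≠ natSeq F hF n := by
  have h : natSeq F hF n ∈ F \ ⋃ m : Fin n, {natSeq F hF m.1} := by
    rw [natSeq_eq]
    exact WellFounded.min_mem _ _ _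
  refine ⟨h.1, fun m hm he => h.2 ?_⟩
  exact Set.mem_iUnion.2 ⟨⟨m, hm⟩, Set.mem_singleton_iff.2 he.symm⟩

theorem natSeq_strictMono (F : Set ι) (hF : F.Infinite) : StrictMono (natSeq F hF) := by
  intro m n hmn
  have hn := natSeq_spec F hF n
  have hmem : natSeq F hF n ∈ F \ ⋃ k : Fin m, {natSeq F hF k.1} := by
    refine ⟨hn.1, ?_⟩
    rw [Set.mem_iUnion]
    rintro ⟨k, hk⟩
    exact hn.2 k.1 (k.2.trans hmn) (Set.mem_singleton_iff.1 hk).symm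
  have hle := WellFounded.not_lt_min (IsWellFounded.wf (r := ((· < ·) : ι → ι → Prop)))
    (F \ ⋃ k : Fin m, {natSeq F hF k.1})
    hmem
  rw [← natSeq_eq] at hle
  exact lt_of_le_of_ne (not_lt.1 hle) (hn.2 m hmn)

theorem exists_infinite_mono {ι C : Type u} [LinearOrder ι] [WellFoundedLT ι]
    (κ : Cardinal.{u}) (hκ : ℵ₀ ≤ κ) (hC : #C ≤ κ) (hι : Order.succ (2 ^ κ) ≤ #ι)
    (c : ι → ι → C) (hsymm : ∀ x y, c x y = c y x) :
    ∃ (S : C) (F : Set ι), F.Infinite ∧ ∀ x ∈ F, ∀ y ∈ F, x ≠ y → c x y = S := by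
  classical
  set θ : Ordinal.{u} := (Order.succ κ).ord with hθ
  by_cases hcase : ∃ x : ι, ∀ ξ < θ, branch c x ξ ≠ x
  · -- Case 1: some branch runs for θ stages: end-homogeneous sequence
    obtain ⟨x, hx⟩ := hcase
    have key : ∀ η ξ : Ordinal.{u}, η < ξ → ξ < θ →
        branch c x η ≠ branch c x ξ ∧
          c (branch c x η) (branch c x ξ) = c (branch c x η) x := by
      intro η ξ h1 h2
      have hQ := branch_spec (c := c) (x := x) (ξ := ξ)
        (fun η' hη' => hx η' (hη'.trans h2))
      exact ⟨hQ.1 ⟨η, h1⟩, hQ.2 ⟨η, h1⟩⟩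
    set e := (Ordinal.ToType.mk (o := θ)) with he
    set m : θ.ToType → ι := fun i => branch c x ((e.symm i).1) with hm
    have minj : Function.Injective m := by
      intro i j hm2
      by_contra hne
      have hvne : ((e.symm i).1 : Ordinal) ≠ (e.symm j).1 := by
        intro h
        exact hne (e.symm.injective (Subtype.ext h))
      rcases hvne.lt_or_gt with h | h
      · exact (key _ _ h (e.symm j).2).1 hm2
      · exact (key _ _ h (e.symm i).2).1 hm2.symm
    set G : θ.ToType → C := fun i => c (m i) x with hG
    have hfiber : ∃ S : C, (G ⁻¹' {S}).Infinite := by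
      by_contra h
      push_neg at h
      have huniv : (Set.univ : Set θ.ToType) = ⋃ S : C, G ⁻¹' {S} := by
        ext i; simp
      have hle : #θ.ToType ≤ κ := by
        calc #θ.ToType = #(Set.univ : Set θ.ToType) := Cardinal.mk_univ.symm
          _ = #(⋃ S : C, G ⁻¹' {S}) := by rw [huniv]
          _ ≤ #C * ⨆ S : C, #(G ⁻¹' {S}) := Cardinal.mk_iUnion_le _
          _ ≤ κ * ℵ₀ := mul_le_mul' hC (ciSup_le' fun S => (h S).lt_aleph0.le)
          _ = κ := Cardinal.mul_aleph0_eq hκ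
      have hsucc : #θ.ToType = Order.succ κ := by
        rw [Cardinal.mk_toType, hθ, Cardinal.card_ord]
      rw [hsucc] at hle
      exact (Order.lt_succ κ).not_ge hle
    obtain ⟨S, hS⟩ := hfiber
    refine ⟨S, m '' (G ⁻¹' {S}), hS.image minj.injOn, ?_⟩
    rintro _ ⟨i, hi, rfl⟩ _ ⟨j, hj, rfl⟩ hne
    have hij : ((e.symm i).1 : Ordinal) ≠ (e.symm j).1 := fun h =>
      hne (congrArg m (e.symm.injective (Subtype.ext h)))
    rcases hij.lt_or_gt with h | h
    · exact ((key _ _ h (e.symm j).2).2).trans hi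
    · exact (hsymm (m i) (m j)).trans (((key _ _ h (e.symm i).2).2).trans hj)
  · -- Case 2: every branch hits its element before θ : counting contradiction
    exfalso
    push_neg at hcase
    set xi : ι → Ordinal.{u} := fun x => sInf {ξ | branch c x ξ = x} with hxi
    have hxi_mem : ∀ x, branch c x (xi x) = x := by
      intro x
      obtain ⟨ξ, _, h2⟩ := hcase x
      exact csInf_mem (s := {ξ | branch c x ξ = x}) ⟨ξ, h2⟩
    have hxi_lt : ∀ x, xi x < θ := by
      intro x
      obtain ⟨ξ, h1, h2⟩ := hcase x
      exact lt_of_le_of_lt (csInf_le' h2) h1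
    have hxi_min : ∀ x, ∀ η < xi x, branch c x η ≠ x := by
      intro x η hη he
      exact (csInf_le' (show η ∈ {ξ | branch c x ξ = x} from he)).not_gt hη
    set K := κ.ord.ToType with hKdef
    have hK : #K = κ := by rw [hKdef, Cardinal.mk_toType, Cardinal.card_ord]
    have hEmb : ∀ ξ : Ordinal.{u}, ξ < θ → Nonempty (ξ.ToType ↪ K) := by
      intro ξ hξ
      rw [← Cardinal.le_def, Cardinal.mk_toType, hK]
      exact (Order.lt_succ_iff).1 (Cardinal.lt_ord.1 hξ)
    have E : ∀ ξ : Ordinal.{u}, ξ < θ → (ξ.ToType ↪ K) := fun ξ hξ =>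
      Classical.choice (hEmb ξ hξ)
    set code : ι → θ.ToType × (K → Option C) := fun x =>
      ((Ordinal.ToType.mk (o := θ)) ⟨xi x, hxi_lt x⟩,
       Function.extend (E (xi x) (hxi_lt x))
         (fun j => some (c (branch c x (((Ordinal.ToType.mk (o := xi x))).symm j).1) x))
         (fun _ => none)) with hcode
    have code_eval : ∀ (x : ι) (ξ : Ordinal.{u}), xi x = ξ → ∀ (η : Ordinal.{u})
        (hη : η < ξ) (hξθ : ξ < θ),
        (code x).2 (E ξ hξθ ((Ordinal.ToType.mk (o := ξ)) ⟨η, hη⟩)) =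
          some (c (branch c x η) x) := by
      intro x ξ hx2 η hη hξθ
      subst hx2
      simp only [hcode]
      rw [show hξθ = hxi_lt x from rfl,
        Function.Injective.extend_apply (E (xi x) (hxi_lt x)).injective,
        OrderIso.symm_apply_apply]
    have hcinj : Function.Injective code := by
      intro x y hxy
      have e1 : xi x = xi y := by
        have h1 := congrArg Prod.fst hxy
        simp only [hcode] at h1
        exact congrArg Subtype.val (((Ordinal.ToType.mk (o := θ))).injective h1)
      have hcol : ∀ η < xi x, c (branch c x η) x = c (branch c y η) y := by
        intro η hη
        have h2 := congrFun (congrArg Prod.snd hxy)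
          (E (xi x) (hxi_lt x) ((Ordinal.ToType.mk (o := xi x)) ⟨η, hη⟩))
        rw [code_eval x (xi x) rfl η hη (hxi_lt x),
          code_eval y (xi x) e1.symm η hη (hxi_lt x)] at h2
        exact Option.some.inj h2
      have hbd := branch_det c x y (xi x) (hxi_min x)
        (fun η hη => hxi_min y η (e1 ▸ hη)) hcol (xi x) le_rfl
      rw [hxi_mem x, e1, hxi_mem y] at hbd
      exact hbd
    have hcard : #ι ≤ 2 ^ κ := by
      have h1 : #ι ≤ #(θ.ToType × (K → Option C)) := Cardinal.mk_le_of_injective hcinj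
      have h2 : #(θ.ToType × (K → Option C)) = Order.succ κ * (#C + 1) ^ κ := by
        rw [Cardinal.mk_prod, Cardinal.lift_id, Cardinal.lift_id, Cardinal.mk_toType,
          hθ, Cardinal.card_ord, ← Cardinal.power_def, Cardinal.mk_option, hK]
      have h3 : Order.succ κ ≤ 2 ^ κ := Order.succ_le_of_lt (Cardinal.cantor κ)
      have h4 : (#C + 1) ^ κ ≤ 2 ^ κ := by
        calc (#C + 1) ^ κ ≤ κ ^ κ := by
              apply Cardinal.power_le_power_right
              calc #C + 1 ≤ κ + 1 := add_le_add_left hC 1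
                _ = κ := Cardinal.add_one_eq hκ
          _ = 2 ^ κ := Cardinal.power_self_eq hκ
      calc #ι ≤ Order.succ κ * (#C + 1) ^ κ := h2 ▸ h1
        _ ≤ 2 ^ κ * 2 ^ κ := mul_le_mul' h3 h4
        _ = 2 ^ (κ + κ) := (Cardinal.power_add 2 κ κ).symm
        _ = 2 ^ κ := by rw [Cardinal.add_eq_self hκ]
    exact (Order.succ_le_iff.1 hι).not_ge hcard


end StmtAux

/-- For a countably complete filter `D` on an infinite set `A` and `δ ≥ (2^{2^{|A|}})⁺`,
any `δ`-indexed sequence of ordinal-valued functions on `A` contains a pair increasing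
modulo `D`. -/
theorem stmt2 {A : Type*} [Infinite A] (D : Filter A) [CountableInterFilter D]
    (δ : Ordinal)
    (hδ : (Order.succ ((2 : Cardinal) ^ ((2 : Cardinal) ^ Cardinal.mk A))).ord ≤ δ)
    (f : Ordinal → A → Ordinal) :
    ∃ β γ : Ordinal, β < γ ∧ γ < δ ∧ {a : A | f β a ≤ f γ a} ∈ D := by
  classical
  set κ : Cardinal := (2 : Cardinal) ^ Cardinal.mk A with hκdef
  have hκ : ℵ₀ ≤ κ := (Cardinal.aleph0_le_mk A).trans (Cardinal.cantor _).le
  have hcard : Order.succ ((2 : Cardinal) ^ κ) ≤ #δ.ToType := by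
    rw [Cardinal.mk_toType]
    calc Order.succ ((2 : Cardinal) ^ κ)
        = ((Order.succ ((2 : Cardinal) ^ κ)).ord).card := (Cardinal.card_ord _).symm
      _ ≤ δ.card := Ordinal.card_le_card hδ
  set e := (Ordinal.ToType.mk (o := δ)) with he
  set ordOf : δ.ToType → Ordinal := fun x => (e.symm x).1 with hordOf
  have hord_lt : ∀ x, ordOf x < δ := fun x => (e.symm x).2
  have hord_mono : ∀ {x y : δ.ToType}, x < y → ordOf x < ordOf y := by
    intro x y h
    exact Subtype.coe_lt_coe.2 (e.symm.strictMono h)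
  set c : δ.ToType → δ.ToType → Set A := fun x y =>
    {a | f (min (ordOf x) (ordOf y)) a ≤ f (max (ordOf x) (ordOf y)) a} with hc
  have hsymm : ∀ x y, c x y = c y x := by
    intro x y
    simp only [hc, min_comm, max_comm]
  have hC : #(Set A) ≤ κ := le_of_eq (by rw [hκdef, Cardinal.mk_set])
  obtain ⟨S, F, hFinf, hhom⟩ := StmtAux.exists_infinite_mono κ hκ hC hcard c hsymm
  set y := StmtAux.natSeq F hFinf with hy
  have hymem : ∀ n, y n ∈ F := fun n => (StmtAux.natSeq_spec F hFinf n).1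
  have hymono := StmtAux.natSeq_strictMono F hFinf
  have hset : ∀ i j : ℕ, i < j →
      {a : A | f (ordOf (y i)) a ≤ f (ordOf (y j)) a} = S := by
    intro i j hij
    have hlt := hord_mono (hymono hij)
    have h1 := hhom (y i) (hymem i) (y j) (hymem j) (hymono hij).ne
    simp only [hc] at h1
    rw [min_eq_left hlt.le, max_eq_right hlt.le] at h1
    exact h1
  refine ⟨ordOf (y 0), ordOf (y 1), hord_mono (hymono Nat.zero_lt_one), hord_lt _, ?_⟩
  have huniv : {a : A | f (ordOf (y 0)) a ≤ f (ordOf (y 1)) a} = Set.univ := by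
    apply Set.eq_univ_of_forall
    intro a
    by_contra ha
    have hdec : ∀ i j : ℕ, i < j → f (ordOf (y j)) a < f (ordOf (y i)) a := by
      intro i j hij
      have hne : a ∉ S := by
        rw [← hset 0 1 Nat.zero_lt_one]
        exact ha
      have h2 : a ∉ {a : A | f (ordOf (y i)) a ≤ f (ordOf (y j)) a} := by
        rw [hset i j hij]
        exact hne
      exact not_le.1 h2
    set g : ℕ → Ordinal := fun n => f (ordOf (y n)) a with hg
    obtain ⟨n, hn⟩ : ∃ n, g n = sInf (Set.range g) := csInf_mem (Set.range_nonempty g)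
    exact absurd (csInf_le' (Set.mem_range_self (n + 1)))
      (not_le.2 (lt_of_lt_of_le (hdec n (n + 1) (Nat.lt_succ_self n)) hn.le))
  rw [huniv]
  exact Filter.univ_mem
end

section
/- Let D be a filter on a set A, δ a limit ordinal, and ⟨f_α : α < δ⟩ a sequence of functions from A to the ordinals that is <_D-increasing (α < β implies f_α <_D f_β). If f : A → Ord is a ≤_D-least upper bound of the family, then {a ∈ A : f(a) is a limit ordinal} ∈ D. -/
/-- If `⟨f_α : α < δ⟩` (δ limit) is `<_D`-increasing and `f` is a `≤_D`-least upper bound of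
the family, then `f(a)` is a limit ordinal for `D`-almost all `a`. -/
theorem stmt4 {A : Type*} (D : Filter A) (δ : Ordinal) (hδ : Order.IsSuccLimit δ)
    (f : Ordinal → A → Ordinal)
    (hinc : ∀ α β : Ordinal, α < β → β < δ → {a : A | f α a < f β a} ∈ D)
    (g : A → Ordinal)
    (hub : ∀ α < δ, {a : A | f α a ≤ g a} ∈ D)
    (hlub : ∀ g' : A → Ordinal, (∀ α < δ, {a : A | f α a ≤ g' a} ∈ D) →
      {a : A | g a ≤ g' a} ∈ D) :
    {a : A | Order.IsSuccLimit (g a)} ∈ D := by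
  have h1 : (1 : Ordinal) < δ := by
    have := hδ.succ_lt hδ.pos
    simpa using this
  have hub' : ∀ α < δ, {a : A | f α a ≤ Ordinal.pred (g a)} ∈ D := by
    intro α hα
    have hs : Order.succ α < δ := hδ.succ_lt hα
    filter_upwards [hinc α (Order.succ α) (Order.lt_succ α) hs, hub _ hs] with a ha hb
    have hlt : f α a < g a := ha.trans_le hb
    rcases Ordinal.zero_or_succ_or_isSuccLimit (g a) with h0 | ⟨c, hc⟩ | hl
    · rw [h0] at hlt; exact absurd hlt (not_lt_zero)
    · rw [← hc, Ordinal.pred_succ]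
      exact Order.lt_succ_iff.mp (hc ▸ hlt)
    · rw [Ordinal.pred_eq_iff_isSuccPrelimit.mpr hl.isSuccPrelimit]
      exact hlt.le
  have key := hlub _ hub'
  have hzero : {a : A | 0 < g a} ∈ D := by
    filter_upwards [hinc 0 1 zero_lt_one h1, hub 1 h1] with a ha hb
    exact lt_of_le_of_lt (zero_le (a := f 0 a)) (ha.trans_le hb)
  filter_upwards [key, hzero] with a hk h0
  rcases Ordinal.zero_or_succ_or_isSuccLimit (g a) with hz | ⟨c, hc⟩ | hl
  · exact absurd hz h0.ne'
  · rw [← hc, Ordinal.pred_succ] at hk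
    exact absurd hk (not_le.mpr (hc ▸ Order.lt_succ c))
  · exact hl
end

section
/- Let D be a filter on a set A, and let I be a directed partial order in which every subset of cardinality at most 2^{|A|} has an upper bound. Let ⟨f_t : t ∈ I⟩ be a family of functions from A to the ordinals which is ≤_D-increasing (s ≤_I t implies f_s ≤_D f_t), and suppose g is a ≤_D-least upper bound of {f_t : t ∈ I}. Then g is a ≤_D-exact upper bound: for every h : A → Ord with h(a) < max(g(a),1) for all a ∈ A, there exists t ∈ I such that {a ∈ A : h(a) < max(f_t(a),1)} ∈ D. -/
/-!
Suppose `h < max(g, 1)` pointwise. The sets `X t = {a | h a < max (f t a) 1}` range over at most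
`2^|A|` subsets of `A`, so one index `T` lies above a representative of each of them; since the
family is `≤_D`-increasing, every `X t` is then `D`-almost contained in `X T`. The function equal
to `g` on `X T` and to `h` off it is therefore still a `≤_D`-upper bound, so by leastness `g` is
`D`-almost everywhere below it. Off `X T` this would give `max (g a) 1 ≤ h a`, which is
impossible; hence `X T ∈ D`.
-/

universe uA uI

open Filter Cardinal

section ExactUpperBound

variable {A I β : Type*} [LinearOrder β] {D : Filter A}
  {f : I → A → β} {c : β}

theorem eventually_lt_max_imp_of_le [Preorder I] (hinc : ∀ s t, s ≤ t → f s ≤ᶠ[D] f t)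
    (h : A → β) {s t : I} (hst : s ≤ t) :
    ∀ᶠ a in D, h a < max (f s a) c → h a < max (f t a) c := by
  filter_upwards [hinc s t hst] with a hfa hs
  exact hs.trans_le (max_le_max_right c hfa)

theorem eventually_lt_max_of_eventually_imp {g h : A → β} (hub : ∀ t, f t ≤ᶠ[D] g)
    (hlub : ∀ g' : A → β, (∀ t, f t ≤ᶠ[D] g') → g ≤ᶠ[D] g') (hh : ∀ a, h a < max (g a) c)
    {T : I} (hT : ∀ t, ∀ᶠ a in D, h a < max (f t a) c → h a < max (f T a) c) :
    ∀ᶠ a in D, h a < max (f T a) c := by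
  classical
  set X := {a | h a < max (f T a) c}
  have hub' : ∀ t, f t ≤ᶠ[D] X.piecewise g h := by
    intro t
    filter_upwards [hub t, hT t] with a hga hXa
    by_cases ha : a ∈ X
    · rwa [Set.piecewise_eq_of_mem _ _ _ ha]
    · rw [Set.piecewise_eq_of_notMem _ _ _ ha]
      exact (le_max_left _ c).trans (not_lt.1 (mt hXa ha))
  filter_upwards [hlub _ hub'] with a hga
  by_contra ha
  rw [Set.piecewise_eq_of_notMem X g h ha] at hga
  exact (hh a).not_ge (max_le hga ((le_max_right _ c).trans (not_lt.1 ha)))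

end ExactUpperBound

theorem exists_forall_exists_le_eq {I : Type uI} {B : Type uA} [Preorder I]
    (hdir : ∀ S : Set I, lift.{uA} #S ≤ lift.{uI} #B → ∃ t, ∀ s ∈ S, s ≤ t) (X : I → B) :
    ∃ T, ∀ t, ∃ s ≤ T, X s = X t := by
  obtain ⟨t₀, -⟩ := hdir ∅ (by simp)
  have : Nonempty I := ⟨t₀⟩
  obtain ⟨T, hT⟩ := hdir (Set.range (Function.invFun X)) mk_range_le_lift
  exact ⟨T, fun t => ⟨_, hT _ ⟨X t, rfl⟩, Function.invFun_eq ⟨t, rfl⟩⟩⟩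

/-- If `I` is a directed partial order in which every subset of size `≤ 2^{|A|}` has an upper
bound, `⟨f_t : t ∈ I⟩` is `≤_D`-increasing, and `g` is a `≤_D`-least upper bound of the family,
then `g` is a `≤_D`-exact upper bound. -/
theorem stmt5 {A : Type uA} {I : Type uI} [PartialOrder I] (D : Filter A)
    (hdir : ∀ S : Set I, Cardinal.lift.{uA} (Cardinal.mk S) ≤
        Cardinal.lift.{uI} ((2 : Cardinal) ^ Cardinal.mk A) →
      ∃ t : I, ∀ s ∈ S, s ≤ t)
    (f : I → A → Ordinal)
    (hinc : ∀ s t : I, s ≤ t → {a : A | f s a ≤ f t a} ∈ D)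
    (g : A → Ordinal)
    (hub : ∀ t : I, {a : A | f t a ≤ g a} ∈ D)
    (hlub : ∀ g' : A → Ordinal, (∀ t : I, {a : A | f t a ≤ g' a} ∈ D) →
      {a : A | g a ≤ g' a} ∈ D) :
    ∀ h : A → Ordinal, (∀ a : A, h a < max (g a) 1) →
      ∃ t : I, {a : A | h a < max (f t a) 1} ∈ D := by
  intro h hh
  obtain ⟨T, hT⟩ := exists_forall_exists_le_eq (B := Set A) (by simpa only [mk_set] using hdir)
    fun t => {a | h a < max (f t a) 1}
  refine ⟨T, eventually_lt_max_of_eventually_imp hub hlub hh fun t => ?_⟩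
  obtain ⟨s, hsT, hst⟩ := hT t
  filter_upwards [eventually_lt_max_imp_of_le hinc h hsT] with a hs ht
  exact hs ((Set.ext_iff.1 hst a).2 ht)
end

section
/- Let δ be a limit ordinal and ⟨λ_i : i < δ⟩ a strictly increasing continuous sequence of infinite cardinals with limit λ. Suppose for each i < δ there is given an injection G_i from ∏_{j<i} λ_j into some cardinal λ*_i < λ_{i+1} (uniformly, i.e. the sequence ⟨G_i : i < δ⟩ exists). Then there is a family F ⊆ ∏_{i<δ} λ*_i of cardinality ∏_{i<δ} λ_i whose members are pairwise distinct modulo the ideal of bounded subsets of δ: for distinct f, g ∈ F, the set {i < δ : f(i) = g(i)} is bounded in δ. -/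
/-- Galvin–Hajnal: if `⟨λ_i : i < δ⟩` is strictly increasing continuous with injections
`G_i : ∏_{j<i} λ_j → λ*_i < λ_{i+1}`, then there is a family `F ⊆ ∏_{i<δ} λ*_i` of
cardinality `∏_{i<δ} λ_i` whose members are pairwise eventually distinct (distinct modulo
the ideal of bounded subsets of `δ`). -/
theorem stmt12 (δ : Ordinal) (hδ : Order.IsSuccLimit δ)
    (lam : Ordinal → Cardinal)
    (hinf : ∀ i < δ, Cardinal.aleph0 ≤ lam i)
    (hstrict : ∀ i j : Ordinal, i < j → j < δ → lam i < lam j)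
    (hcont : ∀ i : Ordinal, i < δ → Order.IsSuccLimit i → lam i = ⨆ j : Set.Iio i, lam j.1)
    (lamStar : Ordinal → Cardinal)
    (hstar : ∀ i < δ, lamStar i < lam (i + 1))
    (G : (i : Ordinal) → (Set.Iio i → Ordinal) → Ordinal)
    (hG1 : ∀ i < δ, ∀ h : Set.Iio i → Ordinal,
      (∀ j : Set.Iio i, h j < (lam j.1).ord) → G i h < (lamStar i).ord)
    (hG2 : ∀ i < δ, ∀ h₁ h₂ : Set.Iio i → Ordinal,
      (∀ j : Set.Iio i, h₁ j < (lam j.1).ord) → (∀ j : Set.Iio i, h₂ j < (lam j.1).ord) →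
      G i h₁ = G i h₂ → h₁ = h₂) :
    ∃ F : Set (Set.Iio δ → Ordinal),
      (∀ f ∈ F, ∀ j : Set.Iio δ, f j < (lamStar j.1).ord) ∧
      Cardinal.mk F =
        Cardinal.mk {h : Set.Iio δ → Ordinal // ∀ j : Set.Iio δ, h j < (lam j.1).ord} ∧
      ∀ f ∈ F, ∀ g ∈ F, f ≠ g → ∃ i₀ < δ, ∀ j : Set.Iio δ, i₀ ≤ j.1 → f j ≠ g j := by
  classical
  set P := {h : Set.Iio δ → Ordinal // ∀ j : Set.Iio δ, h j < (lam j.1).ord} with hP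
  -- restriction
  let restr : (Set.Iio δ → Ordinal) → (j : Set.Iio δ) → (Set.Iio j.1 → Ordinal) :=
    fun h j k => h ⟨k.1, Set.mem_Iio.mpr (lt_trans k.2 j.2)⟩
  let Φ : P → (Set.Iio δ → Ordinal) := fun h j => G j.1 (restr h.1 j)
  have hrb : ∀ (h : P) (j : Set.Iio δ), ∀ k : Set.Iio j.1, restr h.1 j k < (lam k.1).ord :=
    fun h j k => h.2 ⟨k.1, Set.mem_Iio.mpr (lt_trans k.2 j.2)⟩
  have hΦinj : Function.Injective Φ := by
    intro h₁ h₂ hfg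
    apply Subtype.ext
    funext k
    have hk1 : k.1 + 1 < δ := hδ.succ_lt k.2
    have := hG2 (k.1 + 1) hk1 (restr h₁.1 ⟨k.1 + 1, hk1⟩) (restr h₂.1 ⟨k.1 + 1, hk1⟩)
      (hrb h₁ ⟨k.1 + 1, hk1⟩) (hrb h₂ ⟨k.1 + 1, hk1⟩) (congrFun hfg ⟨k.1 + 1, hk1⟩)
    have := congrFun this ⟨k.1, Order.lt_succ k.1⟩
    simpa [restr] using this
  refine ⟨Set.range Φ, ?_, ?_, ?_⟩
  · rintro f ⟨h, rfl⟩ j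
    exact hG1 j.1 j.2 (restr h.1 j) (hrb h j)
  · exact Cardinal.mk_range_eq Φ hΦinj
  · rintro f ⟨h₁, rfl⟩ g ⟨h₂, rfl⟩ hne
    have hne' : h₁ ≠ h₂ := fun e => hne (by rw [e])
    have : ∃ k : Set.Iio δ, h₁.1 k ≠ h₂.1 k := by
      by_contra hc
      push_neg at hc
      exact hne' (Subtype.ext (funext hc))
    obtain ⟨k, hk⟩ := this
    refine ⟨k.1 + 1, hδ.succ_lt k.2, ?_⟩
    intro j hj hcontra
    have hrne : restr h₁.1 j ≠ restr h₂.1 j := by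
      intro e
      apply hk
      have hkj : k.1 < j.1 := lt_of_lt_of_le (Order.lt_succ k.1) hj
      have := congrFun e ⟨k.1, hkj⟩
      simpa [restr] using this
    exact hrne (hG2 j.1 j.2 _ _ (hrb h₁ j) (hrb h₂ j) hcontra)
end

section
/- For every infinite cardinal κ and every cardinal λ ≥ 2: λ^κ = Σ_{β<κ⁺} λ^{|β|} · |β|^κ, where the sum ranges over all ordinals β < κ⁺. -/
universe u

/-- For every infinite cardinal `κ` and every `λ ≥ 2`:
`λ^κ = Σ_{β < κ⁺} λ^{|β|} · |β|^κ`, where the sum ranges over the ordinals `β < κ⁺`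
(represented by the canonical well-ordered type of order type `κ⁺`, each of whose elements
`x` corresponds to the ordinal `typein (· < ·) x`). -/
theorem stmt18 (κ lam : Cardinal.{u}) (hκ : Cardinal.aleph0 ≤ κ) (hlam : 2 ≤ lam) :
    lam ^ κ = Cardinal.sum (fun x : (Order.succ κ).ord.ToType =>
      lam ^ (@Ordinal.typein (Order.succ κ).ord.ToType (· < ·) isWellOrder_lt x).card *
        (@Ordinal.typein (Order.succ κ).ord.ToType (· < ·) isWellOrder_lt x).card ^ κ) := by
  have hlam0 : lam ≠ 0 := by positivity
  have h2κ : 2 ^ κ ≤ lam ^ κ := Cardinal.power_le_power_right hlam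
  have hκlκ : κ < lam ^ κ := lt_of_lt_of_le (Cardinal.cantor κ) h2κ
  have hlκ : Cardinal.aleph0 ≤ lam ^ κ := le_of_lt (lt_of_le_of_lt hκ hκlκ)
  apply le_antisymm
  · -- lower bound via β of order type κ
    have hκord : κ.ord < (Order.succ κ).ord := by
      rw [Cardinal.ord_lt_ord]; exact Order.lt_succ κ
    rw [← Ordinal.type_toType (Order.succ κ).ord] at hκord
    set x := @Ordinal.enum (Order.succ κ).ord.ToType (· < ·) isWellOrder_lt ⟨κ.ord, hκord⟩ with hx
    have htyp : (@Ordinal.typein (Order.succ κ).ord.ToType (· < ·) isWellOrder_lt) x = κ.ord :=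
      @Ordinal.typein_enum _ (· < ·) isWellOrder_lt κ.ord hκord
    refine le_trans ?_ (Cardinal.le_sum _ x)
    rw [htyp, Cardinal.card_ord]
    exact le_mul_of_one_le_right zero_le
      (Cardinal.one_le_iff_ne_zero.2 (Cardinal.power_ne_zero _ (Cardinal.aleph0_pos.trans_le hκ).ne'))
  · -- upper bound: each term ≤ lam ^ κ
    refine le_trans (Cardinal.sum_le_sum _ (fun _ => lam ^ κ) ?_) ?_
    · intro x
      have hcard : ((@Ordinal.typein (Order.succ κ).ord.ToType (· < ·) isWellOrder_lt) x).card ≤ κ := by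
        have := @Ordinal.typein_lt_type _ (· < ·) isWellOrder_lt x
        rw [Ordinal.type_toType] at this
        exact Order.lt_succ_iff.1 (Cardinal.lt_ord.1 this)
      calc lam ^ ((@Ordinal.typein (Order.succ κ).ord.ToType (· < ·) isWellOrder_lt) x).card *
            ((@Ordinal.typein (Order.succ κ).ord.ToType (· < ·) isWellOrder_lt) x).card ^ κ
          ≤ lam ^ κ * (lam ^ κ) := by
            gcongr
            · exact Cardinal.power_le_power_left hlam0 hcard
            · calc ((@Ordinal.typein (Order.succ κ).ord.ToType (· < ·) isWellOrder_lt) x).card ^ κ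
                  ≤ κ ^ κ := Cardinal.power_le_power_right hcard
                _ = 2 ^ κ := Cardinal.power_self_eq hκ
                _ ≤ lam ^ κ := h2κ
        _ = lam ^ (κ + κ) := (Cardinal.power_add _ _ _).symm
        _ = lam ^ κ := by rw [Cardinal.add_eq_self hκ]
    · rw [Cardinal.sum_const', Cardinal.mk_toType, Cardinal.card_ord]
      rw [Cardinal.mul_eq_max (hκ.trans (Order.le_succ κ)) hlκ]
      exact max_le (Order.succ_le_of_lt hκlκ) le_rfl
end

section
/- Let δ be an ordinal and P ⊆ P(δ). Define an increasing transfinite sequence of filters: D₀ is the filter on δ generated by P together with the club filter on δ; D_{ζ+1} = D_ζ ∪ {δ∖B : there is a regressive function f on B such that for every β < δ, the set {α ∈ B : f(α) = β} is in the dual ideal of D_ζ}, closed to a filter; and D_ζ = ⋃_{ξ<ζ} D_ξ at limits. Then the sequence ⟨D_ζ⟩ is ⊆-increasing, is constant from some ζ* < (2^{|δ|})⁺ onward, and its eventual value D^{nor}_δ[P] is the least normal filter on δ containing P and the club filter (possibly the improper filter P(δ)). -/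
/-- `F` is a (possibly improper) filter on the ordinal `δ`, i.e. on the set of ordinals
below `δ`. -/
def IsFilterOn (δ : Ordinal) (F : Set (Set Ordinal)) : Prop :=
  (∀ X ∈ F, X ⊆ Set.Iio δ) ∧ Set.Iio δ ∈ F ∧
    (∀ X ∈ F, ∀ Y : Set Ordinal, Y ⊆ Set.Iio δ → X ⊆ Y → Y ∈ F) ∧
    (∀ X ∈ F, ∀ Y ∈ F, X ∩ Y ∈ F)

/-- The (possibly improper) filter on `δ` generated by a family `G` of subsets of `δ`. -/
def genFilterOn (δ : Ordinal) (G : Set (Set Ordinal)) : Set (Set Ordinal) :=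
  {X | X ⊆ Set.Iio δ ∧ ∃ S : Finset (Set Ordinal),
    ↑S ⊆ G ∧ Set.Iio δ ∩ ⋂₀ (S : Set (Set Ordinal)) ⊆ X}

/-- `C` is a closed unbounded subset of the ordinal `δ`. -/
def IsClubIn (δ : Ordinal) (C : Set Ordinal) : Prop :=
  C ⊆ Set.Iio δ ∧ (∀ β < δ, ∃ x ∈ C, β ≤ x) ∧
    ∀ β : Ordinal, β < δ → Order.IsSuccLimit β → (∀ γ < β, ∃ x ∈ C, γ < x ∧ x < β) → β ∈ C

/-- The club filter on the ordinal `δ`: subsets of `δ` containing a club. -/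
def clubFilterOn (δ : Ordinal) : Set (Set Ordinal) :=
  {X | X ⊆ Set.Iio δ ∧ ∃ C : Set Ordinal, IsClubIn δ C ∧ C ⊆ X}

/-- The sets added at a successor step of the normal-filter construction: complements (in `δ`)
of sets `B` carrying a regressive function all of whose fibers are in the dual ideal of
`Dz`. -/
def normalStepSets (δ : Ordinal) (Dz : Set (Set Ordinal)) : Set (Set Ordinal) :=
  {X | ∃ B : Set Ordinal, ∃ f : Ordinal → Ordinal, B ⊆ Set.Iio δ ∧ X = Set.Iio δ \ B ∧
    (∀ α ∈ B, f α < 1 + α) ∧ ∀ β < δ, Set.Iio δ \ {α ∈ B | f α = β} ∈ Dz}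

/-- A filter on `δ` is normal if every function regressive on a positive set is constant on a
positive set. -/
def IsNormalFilterOn (δ : Ordinal) (F : Set (Set Ordinal)) : Prop :=
  IsFilterOn δ F ∧ ∀ B : Set Ordinal, ∀ f : Ordinal → Ordinal, B ⊆ Set.Iio δ →
    (∀ α ∈ B, f α < 1 + α) → Set.Iio δ \ B ∉ F →
    ∃ β : Ordinal, Set.Iio δ \ {α ∈ B | f α = β} ∉ F

theorem aux_gen_filter (δ : Ordinal) (G : Set (Set Ordinal)) :
    IsFilterOn δ (genFilterOn δ G) := by
  classical
  refine ⟨fun X hX => hX.1, ⟨le_rfl, ∅, by simp⟩, ?_, ?_⟩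
  · rintro X ⟨hX, S, hS, hIS⟩ Y hY hXY
    exact ⟨hY, S, hS, hIS.trans hXY⟩
  · rintro X ⟨hX, S, hS, hIS⟩ Y ⟨hY, T, hT, hIT⟩
    refine ⟨fun a ha => hX ha.1, S ∪ T, ?_, ?_⟩
    · rw [Finset.coe_union]; exact Set.union_subset hS hT
    · rw [Finset.coe_union, Set.sInter_union]
      intro a ha
      exact ⟨hIS ⟨ha.1, ha.2.1⟩, hIT ⟨ha.1, ha.2.2⟩⟩

theorem aux_mem_gen (δ : Ordinal) (G : Set (Set Ordinal)) (X : Set Ordinal)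
    (hX : X ∈ G) (hs : X ⊆ Set.Iio δ) : X ∈ genFilterOn δ G := by
  refine ⟨hs, {X}, by simpa using hX, ?_⟩
  simp only [Finset.coe_singleton, Set.sInter_singleton]
  exact fun a ha => ha.2

theorem aux_gen_le {δ : Ordinal} {G F : Set (Set Ordinal)} (hF : IsFilterOn δ F)
    (hG : G ⊆ F) : genFilterOn δ G ⊆ F := by
  classical
  rintro X ⟨hX, S, hS, hIS⟩
  have key : ∀ T : Finset (Set Ordinal), ↑T ⊆ G →
      Set.Iio δ ∩ ⋂₀ (T : Set (Set Ordinal)) ∈ F := by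
    intro T
    induction T using Finset.induction with
    | empty => intro _; simpa using hF.2.1
    | @insert a s hnot ih =>
      intro hT
      have haF : a ∈ F := hG (hT (by simp))
      have hsF := ih (fun x hx => hT (by simp; tauto))
      have hmem := hF.2.2.2 a haF _ hsF
      refine hF.2.2.1 _ hmem _ (fun y hy => hy.1) ?_
      intro y hy
      simp only [Finset.coe_insert, Set.sInter_insert]
      exact ⟨hy.2.1, hy.1, hy.2.2⟩
  exact hF.2.2.1 _ (key S hS) X hX hIS

theorem aux_reg_lt {δ α x : Ordinal} (hα : α < δ) (hf : x < 1 + α) : x < δ := by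
  rcases lt_or_ge α Ordinal.omega0 with h | h
  · obtain ⟨n, rfl⟩ := Ordinal.lt_omega0.mp h
    have hxo : x < Ordinal.omega0 := hf.trans ((Ordinal.one_add_natCast n) ▸
      Ordinal.lt_omega0.mpr ⟨n+1, by exact_mod_cast rfl⟩ )
    obtain ⟨m, rfl⟩ := Ordinal.lt_omega0.mp hxo
    have : ((1:ℕ) : Ordinal) + n = ((1 + n : ℕ) : Ordinal) := by exact_mod_cast rfl
    rw [Nat.cast_one] at this
    rw [this, Nat.cast_lt] at hf
    have : (m : Ordinal) ≤ n := by exact_mod_cast Nat.le_of_lt_succ (by omega)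
    exact this.trans_lt hα
  · rw [Ordinal.one_add_of_omega0_le h] at hf
    exact hf.trans hα

/-- The transfinite iteration `⟨D_ζ⟩` starting with the filter generated by `P` and the club
filter, adding at each successor step the complements of sets carrying regressive functions
with all fibers in the dual ideal, and taking unions at limits, is increasing, stabilizes
before `(2^{|δ|})⁺`, and its eventual value is the least normal filter on `δ` containing `P`
and the club filter (possibly improper). -/
theorem stmt19 (δ : Ordinal) (P : Set (Set Ordinal)) (hP : ∀ X ∈ P, X ⊆ Set.Iio δ)
    (Dseq : Ordinal → Set (Set Ordinal))
    (h0 : Dseq 0 = genFilterOn δ (P ∪ clubFilterOn δ))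
    (hsucc : ∀ ζ : Ordinal, Dseq (ζ + 1) = genFilterOn δ (Dseq ζ ∪ normalStepSets δ (Dseq ζ)))
    (hlim : ∀ ζ : Ordinal, Order.IsSuccLimit ζ → Dseq ζ = ⋃ ξ ∈ Set.Iio ζ, Dseq ξ) :
    (∀ ξ ζ : Ordinal, ξ ≤ ζ → Dseq ξ ⊆ Dseq ζ) ∧
    ∃ ζs : Ordinal, ζs < (Order.succ ((2 : Cardinal) ^ Ordinal.card δ)).ord ∧
      (∀ ζ : Ordinal, ζs ≤ ζ → Dseq ζ = Dseq ζs) ∧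
      IsNormalFilterOn δ (Dseq ζs) ∧ P ⊆ Dseq ζs ∧ clubFilterOn δ ⊆ Dseq ζs ∧
      ∀ E : Set (Set Ordinal), IsNormalFilterOn δ E → P ⊆ E → clubFilterOn δ ⊆ E →
        Dseq ζs ⊆ E := by
  classical
  have hsucc' : ∀ ζ : Ordinal, Dseq (Order.succ ζ)
      = genFilterOn δ (Dseq ζ ∪ normalStepSets δ (Dseq ζ)) := by
    intro ζ; rw [← Ordinal.add_one_eq_succ]; exact hsucc ζ
  -- filters and monotonicity
  have hfil : ∀ ζ : Ordinal, IsFilterOn δ (Dseq ζ) ∧ ∀ ξ ≤ ζ, Dseq ξ ⊆ Dseq ζ := by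
    intro ζ
    induction ζ using Ordinal.limitRecOn with
    | zero =>
      refine ⟨by rw [h0]; exact aux_gen_filter _ _, ?_⟩
      intro ξ hξ
      rw [nonpos_iff_eq_zero.mp hξ]
    | add_one ζ ih =>
      rw [Ordinal.add_one_eq_succ]
      have hstep : Dseq ζ ⊆ Dseq (Order.succ ζ) := by
        rw [hsucc']
        intro X hX
        exact aux_mem_gen _ _ _ (Or.inl hX) (ih.1.1 X hX)
      refine ⟨by rw [hsucc']; exact aux_gen_filter _ _, ?_⟩
      intro ξ hξ
      rcases lt_or_eq_of_le hξ with h | h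
      · exact (ih.2 ξ (Order.lt_succ_iff.mp h)).trans hstep
      · rw [h]
    | limit ζ hζ ih =>
      have hmono : ∀ ξ ≤ ζ, Dseq ξ ⊆ Dseq ζ := by
        intro ξ hξ
        rcases lt_or_eq_of_le hξ with h | h
        · rw [hlim ζ hζ]
          exact Set.subset_biUnion_of_mem h
        · rw [h]
      refine ⟨?_, hmono⟩
      refine ⟨?_, ?_, ?_, ?_⟩
      · intro X hX
        rw [hlim ζ hζ] at hX
        obtain ⟨ξ, hξ, hmem⟩ := by simpa using hX
        exact (ih ξ hξ).1.1 X hmem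
      · have : Set.Iio δ ∈ Dseq 0 := by
          rw [h0]; exact (aux_gen_filter _ _).2.1
        exact hmono 0 hζ.pos.le this
      · intro X hX Y hYsub hXY
        rw [hlim ζ hζ] at hX ⊢
        obtain ⟨ξ, hξ, hmem⟩ := by simpa using hX
        refine Set.mem_biUnion hξ ((ih ξ hξ).1.2.2.1 X hmem Y hYsub hXY)
      · intro X hX Y hY
        rw [hlim ζ hζ] at hX hY ⊢
        obtain ⟨ξ₁, hξ₁, hm₁⟩ := by simpa using hX
        obtain ⟨ξ₂, hξ₂, hm₂⟩ := by simpa using hY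
        have hξ : max ξ₁ ξ₂ < ζ := max_lt hξ₁ hξ₂
        have h1 := (ih _ hξ).2 ξ₁ (le_max_left _ _) hm₁
        have h2 := (ih _ hξ).2 ξ₂ (le_max_right _ _) hm₂
        exact Set.mem_biUnion hξ ((ih _ hξ).1.2.2.2 X h1 Y h2)
  have hFil : ∀ ζ, IsFilterOn δ (Dseq ζ) := fun ζ => (hfil ζ).1
  have hMono : ∀ ξ ζ : Ordinal, ξ ≤ ζ → Dseq ξ ⊆ Dseq ζ := fun ξ ζ h => (hfil ζ).2 ξ h
  -- constancy beyond a fixpoint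
  have hconst : ∀ ζ0 : Ordinal, Dseq (ζ0 + 1) = Dseq ζ0 →
      ∀ η, ζ0 ≤ η → Dseq η = Dseq ζ0 := by
    intro ζ0 hfix η
    induction η using Ordinal.limitRecOn with
    | zero => intro h; rw [nonpos_iff_eq_zero.mp h]
    | add_one η ih =>
      rw [Ordinal.add_one_eq_succ]
      intro h
      rcases lt_or_eq_of_le h with h | h
      · have hle : ζ0 ≤ η := Order.lt_succ_iff.mp h
        rw [hsucc', ih hle, ← hsucc ζ0]
        exact hfix
      · rw [← h]
    | limit η hη ih =>
      intro h
      rcases eq_or_lt_of_le h with h | h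
      · rw [← h]
      · rw [hlim η hη]
        apply Set.Subset.antisymm
        · refine Set.iUnion₂_subset ?_
          intro ξ hξ
          rcases le_total ξ ζ0 with hle | hle
          · exact hMono ξ ζ0 hle
          · exact (ih ξ hξ hle).le
        · exact Set.subset_biUnion_of_mem h
  -- existence of a fixpoint below the successor cardinal
  set κ := (2 : Cardinal) ^ Ordinal.card δ with hκ
  have hexists : ∃ ζ0 : Ordinal, ζ0 < (Order.succ κ).ord ∧ Dseq (ζ0 + 1) = Dseq ζ0 := by
    by_contra hno
    push_neg at hno
    have hx : ∀ ζ : Ordinal, ζ < (Order.succ κ).ord →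
        ∃ X, X ∈ Dseq (ζ + 1) ∧ X ∉ Dseq ζ := by
      intro ζ hζ
      by_contra hc
      push_neg at hc
      exact hno ζ hζ (Set.Subset.antisymm hc (hMono ζ (ζ+1) (le_self_add)))
    choose x hx1 hx2 using hx
    set g : ↥(Set.Iio (Order.succ κ).ord) → Set ↥(Set.Iio δ) :=
      fun ζ => {a | (a : Ordinal) ∈ x ζ.1 ζ.2} with hg
    have hginj : Function.Injective g := by
      intro ξ ζ hgeq
      by_contra hne
      have hne' : (ξ : Ordinal) ≠ (ζ : Ordinal) := fun h => hne (Subtype.ext h)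
      have hxeq : x ξ.1 ξ.2 = x ζ.1 ζ.2 := by
        ext a
        constructor
        · intro ha
          have haδ : a ∈ Set.Iio δ := (hFil _).1 _ (hx1 ξ.1 ξ.2) ha
          have : (⟨a, haδ⟩ : ↥(Set.Iio δ)) ∈ g ξ := ha
          rw [hgeq] at this
          exact this
        · intro ha
          have haδ : a ∈ Set.Iio δ := (hFil _).1 _ (hx1 ζ.1 ζ.2) ha
          have : (⟨a, haδ⟩ : ↥(Set.Iio δ)) ∈ g ζ := ha
          rw [← hgeq] at this
          exact this
      rcases hne'.lt_or_gt with h | h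
      · have : x ξ.1 ξ.2 ∈ Dseq ζ.1 :=
          hMono (ξ.1 + 1) ζ.1 (by rwa [Ordinal.add_one_eq_succ, Order.succ_le_iff])
            (hx1 ξ.1 ξ.2)
        rw [hxeq] at this
        exact hx2 ζ.1 ζ.2 this
      · have : x ζ.1 ζ.2 ∈ Dseq ξ.1 :=
          hMono (ζ.1 + 1) ξ.1 (by rwa [Ordinal.add_one_eq_succ, Order.succ_le_iff])
            (hx1 ζ.1 ζ.2)
        rw [← hxeq] at this
        exact hx2 ξ.1 ξ.2 this
    have hcard := Cardinal.mk_le_of_injective hginj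
    rw [Cardinal.mk_set, Ordinal.mk_Iio_ordinal, Ordinal.mk_Iio_ordinal,
      Cardinal.card_ord] at hcard
    rw [← Cardinal.lift_two_power, Cardinal.lift_le] at hcard
    exact (Order.lt_succ κ).not_ge hcard
  obtain ⟨ζ0, hζ0, hfix⟩ := hexists
  have hconst' : ∀ ζ, ζ0 ≤ ζ → Dseq ζ = Dseq ζ0 := hconst ζ0 hfix
  refine ⟨fun ξ ζ h => hMono ξ ζ h, ζ0, hζ0, hconst', ?_, ?_, ?_, ?_⟩
  · -- normality
    refine ⟨hFil ζ0, ?_⟩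
    intro B f hB hreg hBpos
    by_contra hc
    push_neg at hc
    apply hBpos
    have hstep : Set.Iio δ \ B ∈ normalStepSets δ (Dseq ζ0) :=
      ⟨B, f, hB, rfl, hreg, fun β _ => hc β⟩
    have : Set.Iio δ \ B ∈ Dseq (ζ0 + 1) := by
      rw [hsucc]
      exact aux_mem_gen _ _ _ (Or.inr hstep) Set.diff_subset
    rwa [hfix] at this
  · -- P ⊆
    intro X hX
    have : X ∈ Dseq 0 := by
      rw [h0]; exact aux_mem_gen _ _ _ (Or.inl hX) (hP X hX)
    exact hMono 0 ζ0 (zero_le) this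
  · -- club ⊆
    intro X hX
    have : X ∈ Dseq 0 := by
      rw [h0]; exact aux_mem_gen _ _ _ (Or.inr hX) hX.1
    exact hMono 0 ζ0 (zero_le) this
  · -- minimality
    intro E hE hPE hCE
    suffices h : ∀ ζ : Ordinal, Dseq ζ ⊆ E from h ζ0
    intro ζ
    induction ζ using Ordinal.limitRecOn with
    | zero => rw [h0]; exact aux_gen_le hE.1 (Set.union_subset hPE hCE)
    | add_one ζ ih =>
      rw [Ordinal.add_one_eq_succ]
      rw [hsucc']
      refine aux_gen_le hE.1 (Set.union_subset ih ?_)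
      rintro X ⟨B, f, hB, rfl, hreg, hfib⟩
      by_contra hc
      obtain ⟨β, hβ⟩ := hE.2 B f hB hreg hc
      rcases lt_or_ge β δ with h | h
      · exact hβ (ih (hfib β h))
      · apply hβ
        have hempty : {α ∈ B | f α = β} = (∅ : Set Ordinal) := by
          ext α
          simp only [Set.mem_setOf_eq, Set.mem_empty_iff_false, iff_false, not_and]
          intro hαB hfα
          have := aux_reg_lt (hB hαB) (hreg α hαB)
          rw [hfα] at this
          exact absurd this (not_lt.mpr h)
        rw [hempty, Set.diff_empty]
        exact hE.1.2.1
    | limit ζ hζ ih =>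
      rw [hlim ζ hζ]
      exact Set.iUnion₂_subset ih
end
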